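/- arXiv:1307.5409 — 4 statements merged into one kernel-verified Lean document; each statement's English description precedes it below -/
import Mathlib

section
/- Let φ : ℝⁿ → [0,∞) be a log-concave function, φ = e^{−ψ} with ψ : ℝⁿ → ℝ convex, C², strictly convex, with ∇ψ a diffeomorphism onto ℝⁿ, and let f : (0,∞) → ℝ be convex or concave with f*(t) = t f(1/t). Then ∫ φ° f( det(Hess(−ln φ°)) · e^{⟨∇φ°,x⟩/φ°} / (φ°)² ) dx = ∫ φ f*( det(Hess(−ln φ)) · e^{⟨∇φ,x⟩/φ} / φ² ) dx, i.e. D_f(P_{φ°}, Q_{φ°}) = D_{f*}(P_φ, Q_φ). -/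
/-!
Substitute `y = ∇ψ x` in the left-hand integral. Because `L` is the Legendre transform of the
convex function `ψ`, the supremum defining `L (∇ψ x)` is attained at `x`, so
`L (∇ψ x) = ⟪x, ∇ψ x⟫ - ψ x` and `∇L (∇ψ x) = x`; differentiating `∇L ∘ ∇ψ = id` gives
`det Hess L (∇ψ x) = (det Hess ψ x)⁻¹`. The Jacobian of the substitution is `det Hess ψ x`, which is
positive by convexity. With `t = e^{2ψ - ⟪∇ψ, x⟫} det Hess ψ`, the transformed integrand is
`e^{-ψ} t f(1/t)`, the integrand of the right-hand side.
-/

open Real MeasureTheory Set InnerProductSpace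

lemma ConvexOn.comp_add_smul {E : Type*} [AddCommGroup E] [Module ℝ E] {ψ : E → ℝ}
    (hψ : ConvexOn ℝ univ ψ) (x v : E) : ConvexOn ℝ univ (fun t : ℝ => ψ (x + t • v)) := by
  have hline : ((AffineMap.lineMap x (x + v) : ℝ →ᵃ[ℝ] E) : ℝ → E) = fun t => x + t • v := by
    funext t
    simp [AffineMap.lineMap_apply_module', add_comm]
  simpa [Function.comp_def, hline] using hψ.comp_affineMap (AffineMap.lineMap x (x + v))

section Gradient

variable {E : Type*} [NormedAddCommGroup E] [InnerProductSpace ℝ E] [CompleteSpace E]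
  {ψ : E → ℝ}

lemma ContDiff.differentiable_gradient (hψ : ContDiff ℝ 2 ψ) : Differentiable ℝ (gradient ψ) :=
  ((toDual ℝ E).symm.contDiff.comp (hψ.fderiv_right (m := 1) (by norm_num))).differentiable
    one_ne_zero

lemma DifferentiableAt.hasDerivAt_comp_add_smul {x v : E} {t : ℝ}
    (hψ : DifferentiableAt ℝ ψ (x + t • v)) :
    HasDerivAt (fun s : ℝ => ψ (x + s • v)) ⟪gradient ψ (x + t • v), v⟫_ℝ t := by
  have hline : HasDerivAt (fun s : ℝ => x + s • v) v t := by
    simpa using ((hasDerivAt_id t).smul_const v).const_add x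
  simpa [Function.comp_def, toDual_apply_apply] using
    hψ.hasGradientAt.hasFDerivAt.comp_hasDerivAt t hline

lemma ConvexOn.inner_gradient_sub_le (hconv : ConvexOn ℝ univ ψ) (hdiff : Differentiable ℝ ψ)
    (x y : E) : ⟪gradient ψ x, y - x⟫_ℝ ≤ ψ y - ψ x := by
  have hderiv := DifferentiableAt.hasDerivAt_comp_add_smul (x := x) (v := y - x) (t := 0)
    (hdiff _)
  have hslope := (hconv.comp_add_smul x (y - x)).le_slope_of_hasDerivAt (mem_univ 0)
    (mem_univ 1) one_pos hderiv
  simpa [slope_def_field] using hslope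

lemma ConvexOn.inner_fderiv_gradient_apply_self_nonneg (hconv : ConvexOn ℝ univ ψ)
    (hdiff : Differentiable ℝ ψ) {x : E} (hgrad : DifferentiableAt ℝ (gradient ψ) x) (v : E) :
    0 ≤ ⟪fderiv ℝ (gradient ψ) x v, v⟫_ℝ := by
  have hderiv (t : ℝ) := DifferentiableAt.hasDerivAt_comp_add_smul (x := x) (v := v) (t := t)
    (hdiff _)
  have hmono : Monotone fun t : ℝ => ⟪gradient ψ (x + t • v), v⟫_ℝ := by
    intro s t hst
    simpa only [(hderiv _).deriv] using (hconv.comp_add_smul x v).monotoneOn_deriv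
      (fun t _ => (hderiv t).differentiableAt) (mem_univ s) (mem_univ t) hst
  have hsecond : HasDerivAt (fun t : ℝ => ⟪gradient ψ (x + t • v), v⟫_ℝ)
      ⟪fderiv ℝ (gradient ψ) x v, v⟫_ℝ 0 := by
    simpa using (hgrad.hasFDerivAt.hasLineDerivAt v).inner ℝ (hasDerivAt_const 0 v)
  exact hsecond.nonneg_of_monotone hmono

end Gradient

section Determinant

variable {E : Type*} [NormedAddCommGroup E] [InnerProductSpace ℝ E] [FiniteDimensional ℝ E]

lemma LinearMap.det_ne_zero_of_inner_map_self_pos (B : E →ₗ[ℝ] E)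
    (hB : ∀ v ≠ 0, 0 < ⟪B v, v⟫_ℝ) : B.det ≠ 0 := by
  rw [Ne, LinearMap.det_eq_zero_iff_ker_ne_bot, not_not, LinearMap.ker_eq_bot']
  intro v hv
  by_contra hv0
  simpa [hv] using hB v hv0

/-- The maps `t • 1 + (1 - t) • A`, `t ∈ (0, 1]`, are all invertible, so the determinant does not
change sign along this path from `A` to the identity. -/
lemma ContinuousLinearMap.det_pos_of_inner_map_self_nonneg (A : E →L[ℝ] E)
    (hA : ∀ v, 0 ≤ ⟪A v, v⟫_ℝ) (hdet : A.det ≠ 0) : 0 < A.det := by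
  set g : ℝ → ℝ := fun t => (t • (1 : E →L[ℝ] E) + (1 - t) • A).det
  have hg : Continuous g := ContinuousLinearMap.continuous_det.comp (by fun_prop)
  have hg0 : g 0 = A.det := by simp [g]
  have hg1 : g 1 = 1 := by simp [g, ContinuousLinearMap.det]
  have hg_ne : ∀ t ∈ Icc (0 : ℝ) 1, g t ≠ 0 := by
    rintro t ⟨ht0, ht1⟩
    rcases ht0.eq_or_lt with rfl | ht0
    · rwa [hg0]
    refine LinearMap.det_ne_zero_of_inner_map_self_pos _ fun v hv => ?_
    have hform : ⟪(t • (1 : E →L[ℝ] E) + (1 - t) • A) v, v⟫_ℝ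
        = t * ‖v‖ ^ 2 + (1 - t) * ⟪A v, v⟫_ℝ := by
      simp [inner_add_left, real_inner_smul_left]
    have := mul_nonneg (sub_nonneg.2 ht1) (hA v)
    simp only [ContinuousLinearMap.coe_coe, hform]
    positivity
  by_contra hneg
  obtain ⟨t, ht, hgt⟩ := intermediate_value_Icc zero_le_one hg.continuousOn
    (show (0 : ℝ) ∈ Icc (g 0) (g 1) by rw [hg0, hg1]; exact ⟨not_lt.1 hneg, zero_le_one⟩)
  exact hg_ne t ht hgt

end Determinant

lemma det_fderiv_mul_det_fderiv_of_leftInverse {𝕜 F : Type*} [NontriviallyNormedField 𝕜]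
    [NormedAddCommGroup F] [NormedSpace 𝕜 F] {f g : F → F} (hgf : Function.LeftInverse g f)
    {x : F} (hg : DifferentiableAt 𝕜 g (f x)) (hf : DifferentiableAt 𝕜 f x) :
    (fderiv 𝕜 g (f x)).det * (fderiv 𝕜 f x).det = 1 := by
  have hcomp := hg.hasFDerivAt.comp x hf.hasFDerivAt
  rw [hgf.comp_eq_id] at hcomp
  rw [ContinuousLinearMap.det, ContinuousLinearMap.det, ← LinearMap.det_comp,
    ← ContinuousLinearMap.toLinearMap_comp, hcomp.unique (hasFDerivAt_id x)]
  simp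

lemma integral_eq_integral_abs_det_fderiv_smul_of_bijective {E F : Type*}
    [NormedAddCommGroup E] [NormedSpace ℝ E] [FiniteDimensional ℝ E] [MeasurableSpace E]
    [BorelSpace E] [NormedAddCommGroup F] [NormedSpace ℝ F] (μ : Measure E) [μ.IsAddHaarMeasure]
    {f : E → E} {f' : E → E →L[ℝ] E} (hf' : ∀ x, HasFDerivAt f (f' x) x)
    (hf : Function.Bijective f) (g : E → F) :
    ∫ y, g y ∂μ = ∫ x, |(f' x).det| • g (f x) ∂μ := by
  simpa [image_univ, hf.surjective.range_eq] using
    integral_image_eq_integral_abs_det_fderiv_smul μ MeasurableSet.univ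
      (fun x _ => (hf' x).hasFDerivWithinAt) hf.injective.injOn g

section Legendre

variable {E : Type*} [NormedAddCommGroup E] [InnerProductSpace ℝ E] [CompleteSpace E]
  {ψ L : E → ℝ} (hL : ∀ y, IsLUB (range fun x => ⟪x, y⟫_ℝ - ψ x) (L y))
include hL

lemma legendre_apply_gradient (hconv : ConvexOn ℝ univ ψ) (hdiff : Differentiable ℝ ψ) (x : E) :
    L (gradient ψ x) = ⟪x, gradient ψ x⟫_ℝ - ψ x := by
  refine (hL _).unique (IsGreatest.isLUB ⟨⟨x, rfl⟩, ?_⟩)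
  rintro _ ⟨z, rfl⟩
  have := hconv.inner_gradient_sub_le hdiff x z
  rw [inner_sub_right, real_inner_comm x, real_inner_comm z] at this
  dsimp only
  linarith

lemma gradient_legendre_apply_gradient (hconv : ConvexOn ℝ univ ψ) (hdiff : Differentiable ℝ ψ)
    {x : E} (hLd : DifferentiableAt ℝ L (gradient ψ x)) : gradient L (gradient ψ x) = x := by
  have hmin : IsLocalMin (fun y => L y - ⟪x, y⟫_ℝ) (gradient ψ x) := by
    refine IsMinOn.isLocalMin (fun y _ => ?_) Filter.univ_mem
    have hle := (hL y).1 ⟨x, rfl⟩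
    show L _ - _ ≤ L y - _
    rw [legendre_apply_gradient hL hconv hdiff]
    dsimp only at hle
    linarith
  have hzero := hmin.hasFDerivAt_eq_zero
    (hLd.hasGradientAt.hasFDerivAt.sub (innerSL ℝ x).hasFDerivAt)
  refine ext_inner_right ℝ fun v => ?_
  simpa [sub_eq_zero, toDual_apply_apply] using congrArg (fun T => T v) hzero

end Legendre

lemma mul_exp_legendre_mul_eq_exp_mul_perspective (f : ℝ → ℝ) (a p D : ℝ) :
    D * (rexp (-(a - p)) * f (rexp (2 * (a - p) - a) * D⁻¹))
      = rexp (-p) * (rexp (2 * p - a) * D * f (1 / (rexp (2 * p - a) * D))) := by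
  have harg : rexp (2 * (a - p) - a) * D⁻¹ = 1 / (rexp (2 * p - a) * D) := by
    rw [one_div, mul_inv, ← exp_neg]
    ring_nf
  have hweight : rexp (-(a - p)) = rexp (-p) * rexp (2 * p - a) := by
    rw [← exp_add]
    ring_nf
  rw [harg, hweight]
  ring

noncomputable def detHess {n : ℕ} (ψ : EuclideanSpace ℝ (Fin n) → ℝ)
    (x : EuclideanSpace ℝ (Fin n)) : ℝ :=
  LinearMap.det (fderiv ℝ (gradient ψ) x).toLinearMap

/-- In terms of `ψ = -ln φ` and `L = Lψ = -ln φ°`, the argument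
`e^{⟨∇φ,x⟩/φ} φ^{−2} det Hess(−ln φ)` of `f` is `e^{2ψ(x) − ⟨∇ψ(x),x⟩} det Hess ψ(x)`. -/
theorem fDivergence_polar_duality_general {n : ℕ}
    (f : ℝ → ℝ)
    (ψ L : EuclideanSpace ℝ (Fin n) → ℝ)
    (hψ : ContDiff ℝ 2 ψ) (hsc : StrictConvexOn ℝ Set.univ ψ)
    (hL : ∀ y, IsLUB (Set.range fun x => (inner ℝ x y : ℝ) - ψ x) (L y))
    (hdiffeo : Function.Bijective (gradient ψ)) (hLC2 : ContDiff ℝ 2 L) :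
    (∫ y, Real.exp (-(L y)) *
        f (Real.exp (2 * L y - (inner ℝ (gradient L y) y : ℝ)) * detHess L y))
      = ∫ x, Real.exp (-(ψ x)) *
          ((Real.exp (2 * ψ x - (inner ℝ (gradient ψ x) x : ℝ)) * detHess ψ x) *
            f (1 / (Real.exp (2 * ψ x - (inner ℝ (gradient ψ x) x : ℝ)) * detHess ψ x))) := by
  have hconv := hsc.convexOn
  have hψd : Differentiable ℝ ψ := hψ.differentiable two_ne_zero
  have hgradψ := hψ.differentiable_gradient
  have hinv : Function.LeftInverse (gradient L) (gradient ψ) := fun x =>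
    gradient_legendre_apply_gradient hL hconv hψd (hLC2.differentiable two_ne_zero _)
  have hdet (x) : detHess L (gradient ψ x) * detHess ψ x = 1 :=
    det_fderiv_mul_det_fderiv_of_leftInverse hinv (hLC2.differentiable_gradient _) (hgradψ x)
  have hpos (x) : 0 < detHess ψ x :=
    (fderiv ℝ (gradient ψ) x).det_pos_of_inner_map_self_nonneg
      (hconv.inner_fderiv_gradient_apply_self_nonneg hψd (hgradψ x))
      (right_ne_zero_of_mul_eq_one (hdet x))
  rw [integral_eq_integral_abs_det_fderiv_smul_of_bijective volume
    (fun x => (hgradψ x).hasFDerivAt) hdiffeo]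
  refine integral_congr_ae (Filter.Eventually.of_forall fun x => ?_)
  have hDinv : detHess L (gradient ψ x) = (detHess ψ x)⁻¹ := eq_inv_of_mul_eq_one_left (hdet x)
  have habs : |(fderiv ℝ (gradient ψ) x).det| = detHess ψ x := abs_of_pos (hpos x)
  simp only [smul_eq_mul, habs, hDinv, hinv x, legendre_apply_gradient hL hconv hψd,
    real_inner_comm x]
  exact mul_exp_legendre_mul_eq_exp_mul_perspective f _ _ _

/-- Duality `D_f(P_{φ°}, Q_{φ°}) = D_{f*}(P_φ, Q_φ)` for a log-concave
function `φ = e^{−ψ}` with dual `φ° = e^{−Lψ}`, where `f` is convex or concave and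
`f*(t) = t f(1/t)`.  Written in terms of `ψ` and its Legendre transform `L`, the
integrand `e^{⟨∇φ,x⟩/φ} φ^{−2} det Hess(−ln φ)` equals
`e^{2ψ(x) − ⟨∇ψ(x),x⟩} det Hess ψ(x)`. -/
theorem fDivergence_polar_duality {n : ℕ}
    (f : ℝ → ℝ) (hf : ConvexOn ℝ (Set.Ioi (0 : ℝ)) f ∨ ConcaveOn ℝ (Set.Ioi (0 : ℝ)) f)
    (ψ L : EuclideanSpace ℝ (Fin n) → ℝ)
    (hψ : ContDiff ℝ 2 ψ) (hsc : StrictConvexOn ℝ Set.univ ψ)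
    (hL : ∀ y, IsLUB (Set.range fun x => (inner ℝ x y : ℝ) - ψ x) (L y))
    (hdiffeo : Function.Bijective (gradient ψ)) (hLC2 : ContDiff ℝ 2 L)
    (hint1 : Integrable (fun y =>
      Real.exp (-(L y)) * f (Real.exp (2 * L y - (inner ℝ (gradient L y) y : ℝ)) * detHess L y)))
    (hint2 : Integrable (fun x =>
      Real.exp (-(ψ x)) * ((Real.exp (2 * ψ x - (inner ℝ (gradient ψ x) x : ℝ)) * detHess ψ x) *
        f (1 / (Real.exp (2 * ψ x - (inner ℝ (gradient ψ x) x : ℝ)) * detHess ψ x))))) :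
    (∫ y, Real.exp (-(L y)) *
        f (Real.exp (2 * L y - (inner ℝ (gradient L y) y : ℝ)) * detHess L y))
      = ∫ x, Real.exp (-(ψ x)) *
          ((Real.exp (2 * ψ x - (inner ℝ (gradient ψ x) x : ℝ)) * detHess ψ x) *
            f (1 / (Real.exp (2 * ψ x - (inner ℝ (gradient ψ x) x : ℝ)) * detHess ψ x))) :=
  fDivergence_polar_duality_general f ψ L hψ hsc hL hdiffeo hLC2
end

section
/- Equality holds in the entropy inequality for Gaussians: if φ(x) = C e^{−⟨Ax,x⟩} with C > 0 and A an n×n positive definite symmetric matrix, then ∫ φ f( e^{⟨∇φ,x⟩/φ} φ^{−2} det(Hess(−ln φ)) ) dx = f( (∫ φ° dx)/(∫ φ dx) ) ∫ φ dx for every f : (0,∞) → ℝ. -/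
/-! With `ψ x = ⟪T x, x⟫ - log C` for the positive operator `T` of `A`, one has `∇ψ = 2 T`,
so the argument of `f` is the constant `κ = det (2 T) · exp (-2 log C)`. Completing the square
shows that the infimum defining `φ° (2 T y)` is attained at `y`, whence
`φ° ∘ 2 T = exp (-2 log C) · exp (-ψ)`, and the substitution `x = 2 T y` gives
`∫ φ° = κ ∫ exp (-ψ)`. Both sides therefore equal `f κ · ∫ exp (-ψ)`. -/

open Real MeasureTheory

open scoped RealInnerProductSpace

section QuadraticForm

variable {E : Type*} [NormedAddCommGroup E] [InnerProductSpace ℝ E]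

theorem LinearMap.IsSymmetric.inner_map_sub_sub {T : E →ₗ[ℝ] E} (hT : T.IsSymmetric)
    (y z : E) : ⟪T (z - y), z - y⟫ = ⟪T z, z⟫ - 2 * ⟪T y, z⟫ + ⟪T y, y⟫ := by
  simp only [map_sub, inner_sub_left, inner_sub_right, hT z y, real_inner_comm z (T y)]
  ring

theorem LinearMap.IsPositive.isLeast_range_exp_inner_div_exp {T : E →ₗ[ℝ] E}
    (hT : T.IsPositive) (c : ℝ) (y : E) :
    IsLeast (Set.range fun z => exp (-⟪(2 : ℝ) • T y, z⟫) / exp (-(⟪T z, z⟫ - c)))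
      (exp (-2 * c) * exp (-(⟪T y, y⟫ - c))) := by
  have hform : ∀ z, exp (-⟪(2 : ℝ) • T y, z⟫) / exp (-(⟪T z, z⟫ - c))
      = exp (⟪T z, z⟫ - 2 * ⟪T y, z⟫ - c) := fun z => by
    rw [← exp_sub, real_inner_smul_left]
    congr 1
    ring
  have hvalue :
      exp (-2 * c) * exp (-(⟪T y, y⟫ - c)) = exp (⟪T y, y⟫ - 2 * ⟪T y, y⟫ - c) := by
    rw [← exp_add]
    congr 1
    ring
  simp only [hform, hvalue]
  refine ⟨⟨y, rfl⟩, ?_⟩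
  rintro _ ⟨z, rfl⟩
  have hnonneg := hT.2 (z - y)
  rw [RCLike.re_to_real, hT.isSymmetric.inner_map_sub_sub] at hnonneg
  exact exp_le_exp.mpr (by linarith)

theorem LinearMap.IsSymmetric.hasGradientAt_inner_map_self [FiniteDimensional ℝ E]
    {T : E →ₗ[ℝ] E} (hT : T.IsSymmetric) (x : E) :
    HasGradientAt (fun x => ⟪T x, x⟫) ((2 : ℝ) • T x) x := by
  rw [hasGradientAt_iff_hasFDerivAt]
  refine (T.toContinuousLinearMap.hasFDerivAt.inner ℝ (hasFDerivAt_id x)).congr_fderiv ?_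
  ext v
  simp only [ContinuousLinearMap.comp_apply, ContinuousLinearMap.prod_apply,
    fderivInnerCLM_apply, LinearMap.coe_toContinuousLinearMap', ContinuousLinearMap.id_apply,
    InnerProductSpace.toDual_apply_apply, id_eq]
  rw [hT v x, real_inner_comm (T x) v, real_inner_smul_left]
  ring

end QuadraticForm

section ChangeOfVariables

variable {E F : Type*} [NormedAddCommGroup E] [NormedSpace ℝ E] [FiniteDimensional ℝ E]
  [MeasurableSpace E] [BorelSpace E] [NormedAddCommGroup F] [NormedSpace ℝ F]
  (μ : Measure E) [μ.IsAddHaarMeasure]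

theorem integral_comp_linearEquiv (e : E ≃ₗ[ℝ] E) (g : E → F) :
    ∫ x, g (e x) ∂μ = |LinearMap.det (e : E →ₗ[ℝ] E)|⁻¹ • ∫ y, g y ∂μ := by
  let e' := e.toContinuousLinearEquiv.toHomeomorph.toMeasurableEquiv
  have hmap := integral_map_equiv (μ := μ) e' g
  have hdet : LinearMap.det (e : E →ₗ[ℝ] E) ≠ 0 := e.isUnit_det'.ne_zero
  rw [show ⇑e' = ⇑(e : E →ₗ[ℝ] E) from rfl,
    Measure.map_linearMap_addHaar_eq_smul_addHaar μ hdet, integral_smul_measure,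
    ENNReal.toReal_ofReal (abs_nonneg _), abs_inv] at hmap
  exact hmap.symm

theorem integral_eq_abs_det_smul_of_comp_eq (e : E ≃ₗ[ℝ] E) {g h : E → F}
    (hgh : ∀ y, h (e y) = g y) :
    ∫ x, h x ∂μ = |LinearMap.det (e : E →ₗ[ℝ] E)| • ∫ y, g y ∂μ := by
  have hcomp : h = fun x => g (e.symm x) := funext fun x => by
    rw [← hgh, e.apply_symm_apply]
  rw [hcomp, integral_comp_linearEquiv, e.det_coe_symm, abs_inv, inv_inv]

end ChangeOfVariables

theorem detHess_eq_det_of_gradient_eq {n : ℕ} {ψ : EuclideanSpace ℝ (Fin n) → ℝ}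
    {T : EuclideanSpace ℝ (Fin n) →ₗ[ℝ] EuclideanSpace ℝ (Fin n)} (h : gradient ψ = T)
    (x : EuclideanSpace ℝ (Fin n)) : detHess ψ x = LinearMap.det T := by
  rw [detHess, h, show ⇑T = ⇑T.toContinuousLinearMap from rfl, ContinuousLinearMap.fderiv]
  rfl

theorem Matrix.det_toEuclideanLin {n : Type*} [Fintype n] [DecidableEq n]
    (A : Matrix n n ℝ) : LinearMap.det (Matrix.toEuclideanLin A) = A.det := by
  rw [Matrix.toEuclideanLin_eq_toLin_orthonormal, LinearMap.det_toLin]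

theorem entropy_equality_gaussian_general {n : ℕ}
    (A : Matrix (Fin n) (Fin n) ℝ) (hA : A.PosDef)
    (C : ℝ) (f : ℝ → ℝ)
    (ψ : EuclideanSpace ℝ (Fin n) → ℝ)
    (hψ : ψ = fun x => (inner ℝ (Matrix.toEuclideanLin A x) x : ℝ) - Real.log C)
    (φo : EuclideanSpace ℝ (Fin n) → ℝ)
    (hφo : ∀ x, IsGLB (Set.range fun y =>
      Real.exp (-(inner ℝ x y : ℝ)) / Real.exp (-(ψ y))) (φo x)) :
    (∫ x, Real.exp (-(ψ x)) *
        f (Real.exp (2 * ψ x - (inner ℝ (gradient ψ x) x : ℝ)) * detHess ψ x))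
      = f ((∫ x, φo x) / (∫ x, Real.exp (-(ψ x)))) * ∫ x, Real.exp (-(ψ x)) := by
  set T := Matrix.toEuclideanLin A
  have hT : T.IsPositive := Matrix.isPositive_toEuclideanLin_iff.mpr hA.posSemidef
  have hdet : LinearMap.det ((2 : ℝ) • T) = 2 ^ n * A.det := by
    rw [LinearMap.det_smul, Matrix.det_toEuclideanLin, finrank_euclideanSpace_fin]
  set κ := 2 ^ n * A.det * exp (-2 * log C)
  have hgrad : gradient ψ = ⇑((2 : ℝ) • T) := by
    subst hψ
    exact gradient_eq fun x => (hT.isSymmetric.hasGradientAt_inner_map_self x).sub_const _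
  have harg : ∀ x, exp (2 * ψ x - ⟪gradient ψ x, x⟫) * detHess ψ x = κ := fun x => by
    rw [detHess_eq_det_of_gradient_eq hgrad, hdet, hgrad, LinearMap.smul_apply,
      real_inner_smul_left, hψ, mul_comm]
    congr 2
    ring
  have hpolar : ∀ y, φo ((2 : ℝ) • T y) = exp (-2 * log C) * exp (-ψ y) := fun y => by
    subst hψ
    exact (hφo _).unique (hT.isLeast_range_exp_inner_div_exp _ y).isGLB
  have hintegral : ∫ x, φo x = κ * ∫ x, exp (-ψ x) := by
    have hdet_pos : 0 < LinearMap.det ((2 : ℝ) • T) :=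
      hdet ▸ mul_pos (by positivity) hA.det_pos
    let e := ((2 : ℝ) • T).equivOfDetNeZero hdet_pos.ne'
    rw [integral_eq_abs_det_smul_of_comp_eq volume e hpolar, LinearEquiv.coe_ofIsUnitDet,
      abs_of_pos hdet_pos, hdet, integral_const_mul, smul_eq_mul, ← mul_assoc]
  simp_rw [harg, integral_mul_const]
  rcases eq_or_ne (∫ x, exp (-ψ x)) 0 with h | h
  · simp [h]
  · rw [hintegral, mul_div_cancel_right₀ _ h, mul_comm]

/-- Equality in the entropy inequality for Gaussians: for
`φ(x) = C e^{−⟨Ax,x⟩}` with `C > 0` and `A` positive definite symmetric, and any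
`f : (0,∞) → ℝ`,
`∫ φ f( e^{⟨∇φ,x⟩/φ} φ^{−2} det Hess(−ln φ) ) dx = f( (∫φ°)/(∫φ) ) ∫ φ dx`,
where `φ°(x) = inf_y e^{−⟨x,y⟩}/φ(y)`. -/
theorem entropy_equality_gaussian {n : ℕ}
    (A : Matrix (Fin n) (Fin n) ℝ) (hA : A.PosDef) (hAsymm : A.IsSymm)
    (C : ℝ) (hC : 0 < C) (f : ℝ → ℝ)
    (ψ : EuclideanSpace ℝ (Fin n) → ℝ)
    (hψ : ψ = fun x => (inner ℝ (Matrix.toEuclideanLin A x) x : ℝ) - Real.log C)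
    (φo : EuclideanSpace ℝ (Fin n) → ℝ)
    (hφo : ∀ x, IsGLB (Set.range fun y =>
      Real.exp (-(inner ℝ x y : ℝ)) / Real.exp (-(ψ y))) (φo x)) :
    (∫ x, Real.exp (-(ψ x)) *
        f (Real.exp (2 * ψ x - (inner ℝ (gradient ψ x) x : ℝ)) * detHess ψ x))
      = f ((∫ x, φo x) / (∫ x, Real.exp (-(ψ x)))) * ∫ x, Real.exp (-(ψ x)) :=
  entropy_equality_gaussian_general A hA C f ψ hψ φo hφo
end

section
/- Let φ : ℝⁿ → [0,∞) be log-concave (smooth, with det Hess(−ln φ) > 0 on supp φ) and let α, β, λ ∈ ℝ with α ≠ β, λ ≠ β and 1 ≤ (α−β)/(λ−β) < ∞. Then as_λ(φ) ≤ as_α(φ)^{(λ−β)/(α−β)} · as_β(φ)^{(α−λ)/(α−β)}, where as_λ(φ) = ∫_{supp φ} φ ( e^{⟨∇φ,x⟩/φ} φ^{−2} det(Hess(−ln φ)) )^λ dx. -/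
open Real MeasureTheory

/-! With `θ = (λ - β)/(α - β) ∈ (0, 1]` one has `λ = θα + (1 - θ)β`, so the integrand of
`as_λ` is the pointwise geometric mean `(e^{-ψ} h^α)^θ (e^{-ψ} h^β)^{1-θ}` of the integrands
of `as_α` and `as_β`; Hölder's inequality for exponents `θ + (1 - θ) = 1` bounds its integral.
In other words `λ ↦ log as_λ` is convex. -/

theorem integral_rpow_mul_rpow_le {X : Type*} [MeasurableSpace X] {μ : Measure X}
    {f g : X → ℝ} (hf0 : 0 ≤ᵐ[μ] f) (hg0 : 0 ≤ᵐ[μ] g) (hf : Integrable f μ)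
    (hg : Integrable g μ) {p q : ℝ} (hp : 0 ≤ p) (hq : 0 ≤ q) (hpq : p + q = 1) :
    ∫ x, f x ^ p * g x ^ q ∂μ ≤ (∫ x, f x ∂μ) ^ p * (∫ x, g x ∂μ) ^ q := by
  have hfg0 : 0 ≤ᵐ[μ] fun x => f x ^ p * g x ^ q := by
    filter_upwards [hf0, hg0] with x hfx hgx
    exact mul_nonneg (rpow_nonneg hfx p) (rpow_nonneg hgx q)
  have hmeas : AEStronglyMeasurable (fun x => f x ^ p * g x ^ q) μ :=
    ((hf.1.aemeasurable.pow_const p).mul (hg.1.aemeasurable.pow_const q)).aestronglyMeasurable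
  have hofReal : (fun x => ENNReal.ofReal (f x ^ p * g x ^ q)) =ᵐ[μ]
      fun x => ENNReal.ofReal (f x) ^ p * ENNReal.ofReal (g x) ^ q := by
    filter_upwards [hf0, hg0] with x hfx hgx
    rw [ENNReal.ofReal_mul (rpow_nonneg hfx p), ENNReal.ofReal_rpow_of_nonneg hfx hp,
      ENNReal.ofReal_rpow_of_nonneg hgx hq]
  have holder := ENNReal.lintegral_mul_norm_pow_le (μ := μ) hf.1.aemeasurable.ennreal_ofReal
    hg.1.aemeasurable.ennreal_ofReal hp hq hpq
  rw [← ofReal_integral_eq_lintegral_ofReal hf hf0,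
    ← ofReal_integral_eq_lintegral_ofReal hg hg0, ← lintegral_congr_ae hofReal] at holder
  calc ∫ x, f x ^ p * g x ^ q ∂μ
      = (∫⁻ x, ENNReal.ofReal (f x ^ p * g x ^ q) ∂μ).toReal :=
        integral_eq_lintegral_of_nonneg_ae hfg0 hmeas
    _ ≤ (ENNReal.ofReal (∫ x, f x ∂μ) ^ p * ENNReal.ofReal (∫ x, g x ∂μ) ^ q).toReal :=
        ENNReal.toReal_mono (by finiteness) holder
    _ = (∫ x, f x ∂μ) ^ p * (∫ x, g x ∂μ) ^ q := by
        rw [ENNReal.toReal_mul, ← ENNReal.toReal_rpow, ← ENNReal.toReal_rpow,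
          ENNReal.toReal_ofReal (integral_nonneg_of_ae hf0),
          ENNReal.toReal_ofReal (integral_nonneg_of_ae hg0)]

theorem integral_mul_rpow_convex_comb_le {X : Type*} [MeasurableSpace X] {μ : Measure X}
    {w h : X → ℝ} (hw : ∀ x, 0 ≤ w x) (hh : ∀ x, 0 < h x) {α β θ : ℝ} (hθ0 : 0 ≤ θ)
    (hθ1 : θ ≤ 1) (hα : Integrable (fun x => w x * h x ^ α) μ)
    (hβ : Integrable (fun x => w x * h x ^ β) μ) :
    ∫ x, w x * h x ^ (θ * α + (1 - θ) * β) ∂μ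
      ≤ (∫ x, w x * h x ^ α ∂μ) ^ θ * (∫ x, w x * h x ^ β ∂μ) ^ (1 - θ) := by
  have hgeom : ∀ x, w x * h x ^ (θ * α + (1 - θ) * β)
      = (w x * h x ^ α) ^ θ * (w x * h x ^ β) ^ (1 - θ) := fun x => by
    have hhx := hh x
    rw [mul_rpow (hw x) (rpow_nonneg hhx.le _), mul_rpow (hw x) (rpow_nonneg hhx.le _),
      ← rpow_mul hhx.le, ← rpow_mul hhx.le, mul_mul_mul_comm,
      ← rpow_add' (hw x) (by norm_num), ← rpow_add hhx, add_sub_cancel, rpow_one,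
      mul_comm α, mul_comm β]
  simp_rw [hgeom]
  exact integral_rpow_mul_rpow_le
    (.of_forall fun x => mul_nonneg (hw x) (rpow_nonneg (hh x).le _))
    (.of_forall fun x => mul_nonneg (hw x) (rpow_nonneg (hh x).le _)) hα hβ hθ0 (by linarith)
    (by ring)

theorem affineSurfaceArea_holder_general {n : ℕ}
    (ψ : EuclideanSpace ℝ (Fin n) → ℝ)
    (hpos : ∀ x, 0 < detHess ψ x)
    (α β lam : ℝ)
    (hratio : 1 ≤ (α - β) / (lam - β))
    (h : EuclideanSpace ℝ (Fin n) → ℝ)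
    (hh : h = fun x => Real.exp (2 * ψ x - (inner ℝ (gradient ψ x) x : ℝ)) * detHess ψ x)
    (hintα : Integrable (fun x => Real.exp (-(ψ x)) * h x ^ α))
    (hintβ : Integrable (fun x => Real.exp (-(ψ x)) * h x ^ β)) :
    (∫ x, Real.exp (-(ψ x)) * h x ^ lam)
      ≤ (∫ x, Real.exp (-(ψ x)) * h x ^ α) ^ ((lam - β) / (α - β))
        * (∫ x, Real.exp (-(ψ x)) * h x ^ β) ^ ((α - lam) / (α - β)) := by
  have hh0 : ∀ x, 0 < h x := fun x => hh ▸ mul_pos (exp_pos _) (hpos x)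
  have hratio0 : 0 < (α - β) / (lam - β) := one_pos.trans_le hratio
  have hαβ : α - β ≠ 0 := fun h0 => by simp [h0] at hratio0
  have hlamβ : lam - β ≠ 0 := fun h0 => by simp [h0] at hratio0
  set θ := (lam - β) / (α - β) with hθdef
  have hθ : θ = ((α - β) / (lam - β))⁻¹ := (inv_div _ _).symm
  have hlam : θ * α + (1 - θ) * β = lam := by
    rw [hθdef]; field_simp; ring
  have h1θ : 1 - θ = (α - lam) / (α - β) := by
    rw [hθdef]; field_simp; ring
  have key := integral_mul_rpow_convex_comb_le (fun x => (exp_pos (-ψ x)).le) hh0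
    (hθ ▸ (inv_pos.2 hratio0).le) (hθ ▸ inv_le_one_of_one_le₀ hratio) hintα hintβ
  rwa [hlam, h1θ] at key

/-- Monotonicity (Hölder) for `L_λ`-affine surface areas of a log-concave
function `φ = e^{−ψ}` (smooth, with `det Hess(−ln φ) > 0`): if `α ≠ β`, `λ ≠ β` and
`1 ≤ (α−β)/(λ−β)`, then
`as_λ(φ) ≤ as_α(φ)^{(λ−β)/(α−β)} · as_β(φ)^{(α−λ)/(α−β)}`, where
`as_λ(φ) = ∫ φ ( e^{⟨∇φ,x⟩/φ} φ^{−2} det Hess(−ln φ) )^λ dx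
         = ∫ e^{−ψ} ( e^{2ψ−⟨∇ψ,x⟩} det Hess ψ )^λ dx`. -/
theorem affineSurfaceArea_holder {n : ℕ}
    (ψ : EuclideanSpace ℝ (Fin n) → ℝ)
    (hψ : ContDiff ℝ 2 ψ)
    (hpos : ∀ x, 0 < detHess ψ x)
    (α β lam : ℝ) (hαβ : α ≠ β) (hlamβ : lam ≠ β)
    (hratio : 1 ≤ (α - β) / (lam - β))
    (h : EuclideanSpace ℝ (Fin n) → ℝ)
    (hh : h = fun x => Real.exp (2 * ψ x - (inner ℝ (gradient ψ x) x : ℝ)) * detHess ψ x)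
    (hintlam : Integrable (fun x => Real.exp (-(ψ x)) * h x ^ lam))
    (hintα : Integrable (fun x => Real.exp (-(ψ x)) * h x ^ α))
    (hintβ : Integrable (fun x => Real.exp (-(ψ x)) * h x ^ β)) :
    (∫ x, Real.exp (-(ψ x)) * h x ^ lam)
      ≤ (∫ x, Real.exp (-(ψ x)) * h x ^ α) ^ ((lam - β) / (α - β))
        * (∫ x, Real.exp (-(ψ x)) * h x ^ β) ^ ((α - lam) / (α - β)) :=
  affineSurfaceArea_holder_general ψ hpos α β lam hratio h hh hintα hintβ
end

section
/- Let φ : ℝⁿ → [0,∞) be log-concave with suitable smoothness and integrability, h = e^{⟨∇φ,x⟩/φ} φ^{−2} det(Hess(−ln φ)) > 0, and suppose ∫ φ |ln h| dx < ∞. Then the limit Ω_φ = lim_{λ↓0} ( (∫ φ h^λ dx)/(∫ φ dx) )^{1/λ} exists and equals exp( (∫ φ ln h dx) / (∫ φ dx) ). -/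
/-!
Write `F l = ∫ φ h^l`, so that `F 0 = ∫ φ` and the quantity in question is
`exp (log (F l / F 0) / l)`. Since `(h^l - 1)/l` is dominated by `|log h| + h` for `0 < l ≤ 1`,
dominated convergence gives the one-sided derivative `F'(0⁺) = ∫ φ log h`; then
`log (F l / F 0) / l → (log ∘ F)'(0⁺) = F'(0⁺) / F 0`.
-/

open Real MeasureTheory Filter Topology Set

/-- The chord of `exp` on `[0, log t]` bounds `t ^ l` from above, its tangent at `0` from below. -/
lemma abs_rpow_sub_one_div_le {t l : ℝ} (ht : 0 < t) (hl0 : 0 < l) (hl1 : l ≤ 1) :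
    |(t ^ l - 1) / l| ≤ |log t| + t := by
  have hexp : t ^ l = exp (log t * l) := rpow_def_of_pos ht l
  have hlower : log t * l + 1 ≤ t ^ l := hexp ▸ add_one_le_exp _
  have hupper : t ^ l ≤ 1 - l + l * t := by
    have hchord := convexOn_exp.2 (mem_univ 0) (mem_univ (log t))
      (by linarith : (0:ℝ) ≤ 1 - l) hl0.le (by ring)
    simp only [smul_eq_mul, mul_zero, zero_add, exp_zero, exp_log ht] at hchord
    rw [hexp, mul_comm]
    linarith
  rw [abs_le, le_div_iff₀ hl0, div_le_iff₀ hl0]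
  constructor
  · nlinarith [mul_le_mul_of_nonneg_left (neg_abs_le (log t)) hl0.le, mul_pos hl0 ht]
  · nlinarith [mul_nonneg hl0.le (abs_nonneg (log t))]

lemma tendsto_rpow_sub_one_div_nhdsGT {t : ℝ} (ht : 0 < t) :
    Tendsto (fun l : ℝ => (t ^ l - 1) / l) (𝓝[>] 0) (𝓝 (log t)) := by
  have hderiv : HasDerivAt (fun l : ℝ => t ^ l) (log t) 0 := by
    simpa using (hasStrictDerivAt_const_rpow ht 0).hasDerivAt
  simpa [div_eq_inv_mul] using hderiv.tendsto_slope_zero_right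

theorem hasDerivWithinAt_integral_mul_rpow {α : Type*} [MeasurableSpace α] {μ : Measure α}
    {w f : α → ℝ} (hf : ∀ x, 0 < f x) (hw : Integrable w μ)
    (hwlog : Integrable (fun x => w x * |log (f x)|) μ)
    (hwpow : ∀ l ∈ Ioc (0 : ℝ) 1, Integrable (fun x => w x * f x ^ l) μ) :
    HasDerivWithinAt (fun l : ℝ => ∫ x, w x * f x ^ l ∂μ) (∫ x, w x * log (f x) ∂μ)
      (Ioi 0) 0 := by
  rw [hasDerivWithinAt_iff_tendsto_slope' self_notMem_Ioi]
  have hsmall : Ioc (0 : ℝ) 1 ∈ 𝓝[>] 0 := Ioc_mem_nhdsGT zero_lt_one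
  have hwf : Integrable (fun x => w x * f x) μ := by
    simpa using hwpow 1 ⟨zero_lt_one, le_rfl⟩
  refine (tendsto_integral_filter_of_dominated_convergence
      (F := fun l x => w x * ((f x ^ l - 1) / l)) (fun x => ‖w x * |log (f x)|‖ + ‖w x * f x‖) ?_ ?_ (hwlog.norm.add hwf.norm) ?_).congr' ?_
  · filter_upwards [hsmall] with l hl
    simpa [mul_div_assoc', mul_sub] using
      (((hwpow l hl).sub hw).div_const l).aestronglyMeasurable
  · filter_upwards [hsmall] with l hl
    refine ae_of_all _ fun x => ?_
    simp only [norm_mul, Real.norm_eq_abs, abs_abs, abs_of_pos (hf x)]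
    rw [← mul_add]
    exact mul_le_mul_of_nonneg_left (abs_rpow_sub_one_div_le (hf x) hl.1 hl.2) (abs_nonneg _)
  · exact ae_of_all _ fun x => (tendsto_rpow_sub_one_div_nhdsGT (hf x)).const_mul (w x)
  · filter_upwards [hsmall] with l hl
    simp only [slope_def_field, sub_zero, rpow_zero, mul_one]
    rw [← integral_sub (hwpow l hl) hw, ← integral_div]
    congr 1 with x
    ring

theorem tendsto_div_rpow_one_div_of_hasDerivWithinAt {F : ℝ → ℝ} {F' : ℝ}
    (hF : HasDerivWithinAt F F' (Ioi 0) 0) (hF0 : 0 < F 0) :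
    Tendsto (fun l : ℝ => (F l / F 0) ^ (1 / l)) (𝓝[>] 0) (𝓝 (exp (F' / F 0))) := by
  have hlog := hF.log hF0.ne'
  rw [hasDerivWithinAt_iff_tendsto_slope' self_notMem_Ioi] at hlog
  have hpos : ∀ᶠ l in 𝓝[>] 0, 0 < F l := hF.continuousWithinAt.eventually (lt_mem_nhds hF0)
  refine ((continuous_exp.tendsto _).comp hlog).congr' ?_
  filter_upwards [hpos] with l hl
  rw [Function.comp_apply, slope_def_field, rpow_def_of_pos (div_pos hl hF0),
    log_div hl.ne' hF0.ne', sub_zero, mul_one_div]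

theorem omega_limit_general {n : ℕ}
    (ψ : EuclideanSpace ℝ (Fin n) → ℝ)
    (h : EuclideanSpace ℝ (Fin n) → ℝ)
    (hhpos : ∀ x, 0 < h x)
    (hintφ : Integrable (fun x => Real.exp (-(ψ x))))
    (hintlog : Integrable (fun x => Real.exp (-(ψ x)) * |Real.log (h x)|))
    (hintpow : ∀ l : ℝ, Integrable (fun x => Real.exp (-(ψ x)) * h x ^ l)) :
    Tendsto (fun l : ℝ =>
        ((∫ x, Real.exp (-(ψ x)) * h x ^ l) / (∫ x, Real.exp (-(ψ x)))) ^ (1 / l))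
      (nhdsWithin 0 (Set.Ioi (0 : ℝ)))
      (nhds (Real.exp ((∫ x, Real.exp (-(ψ x)) * Real.log (h x))
        / (∫ x, Real.exp (-(ψ x)))))) := by
  have hderiv := hasDerivWithinAt_integral_mul_rpow hhpos hintφ hintlog fun l _ => hintpow l
  have hF0 : ∫ x, exp (-(ψ x)) * h x ^ (0 : ℝ) = ∫ x, exp (-(ψ x)) := by simp
  have hmass : 0 < ∫ x, exp (-(ψ x)) := integral_exp_pos hintφ
  simpa only [hF0] using tendsto_div_rpow_one_div_of_hasDerivWithinAt hderiv (hF0 ▸ hmass)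

/-- For a log-concave `φ = e^{−ψ}` with
`h = e^{⟨∇φ,x⟩/φ} φ^{−2} det Hess(−ln φ) > 0` and `∫ φ |ln h| < ∞`, the limit
`Ω_φ = lim_{λ↓0} ( (∫ φ h^λ)/(∫φ) )^{1/λ}` exists and equals
`exp( (∫ φ ln h)/(∫ φ) )`. -/
theorem omega_limit {n : ℕ}
    (ψ : EuclideanSpace ℝ (Fin n) → ℝ)
    (hψ : ContDiff ℝ 2 ψ)
    (h : EuclideanSpace ℝ (Fin n) → ℝ)
    (hh : h = fun x => Real.exp (2 * ψ x - (inner ℝ (gradient ψ x) x : ℝ)) * detHess ψ x)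
    (hhpos : ∀ x, 0 < h x)
    (hintφ : Integrable (fun x => Real.exp (-(ψ x))))
    (hintlog : Integrable (fun x => Real.exp (-(ψ x)) * |Real.log (h x)|))
    (hintpow : ∀ l : ℝ, Integrable (fun x => Real.exp (-(ψ x)) * h x ^ l)) :
    Tendsto (fun l : ℝ =>
        ((∫ x, Real.exp (-(ψ x)) * h x ^ l) / (∫ x, Real.exp (-(ψ x)))) ^ (1 / l))
      (nhdsWithin 0 (Set.Ioi (0 : ℝ)))
      (nhds (Real.exp ((∫ x, Real.exp (-(ψ x)) * Real.log (h x))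
        / (∫ x, Real.exp (-(ψ x)))))) :=
  omega_limit_general ψ h hhpos hintφ hintlog hintpow
end
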